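/- arXiv:1805.04898 — 4 statements merged into one kernel-verified Lean document; each statement's English description precedes it below -/
import Mathlib

section
/- Assume Q1, A1-i and A1-ii, and let F : Δ^𝒜 → ℝ^𝒜 be a continuous population game. If x* ∈ NE(F), then G^F(x*) = 0 and H^F(x*) = 0. Moreover, if x : [0,∞) → Δ^𝒜 is a continuous path with x_0 = x* such that t ↦ G^F(x_t) has a strictly positive right derivative at t = 0, then there exists T > 0 with x_t ∉ NE(F) for all t ∈ (0, T]. -/
open MeasureTheory Finset
open scoped Classical

/-- The maximal payoff among actions in `S`. -/
noncomputable def piStar {A : Type*} (π : A → ℝ) (S : Finset A) : ℝ :=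
  if h : S.Nonempty then S.sup' h π else 0

/-- `Q(q) = μ_Q((-∞, q])`. -/
noncomputable def Qfun (μQ : Measure ℝ) (q : ℝ) : ℝ := (μQ (Set.Iic q)).toReal

/-- The individual ex-ante first-order net gain `g_{a*}[π]`. -/
noncomputable def gain {A : Type*} [Fintype A] [DecidableEq A]
    (P : A → Finset A → ℝ) (μQ : Measure ℝ) (π : A → ℝ) (a : A) : ℝ :=
  ∑ A' ∈ (Finset.univ.erase a).powerset,
    P a A' * ∫ q, max (piStar π A' - π a - q) 0 ∂μQ

/-- `g_{**}[π](S) = min_{b ∈ S} g_{b*}[π]`. -/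
noncomputable def gainMin {A : Type*} [Fintype A] [DecidableEq A]
    (P : A → Finset A → ℝ) (μQ : Measure ℝ) (π : A → ℝ) (S : Finset A) : ℝ :=
  if h : S.Nonempty then S.inf' h (fun b => gain P μQ π b) else 0

/-- The individual ex-ante second-order net gain `h_{a*}[π]`. -/
noncomputable def gain2 {A : Type*} [Fintype A] [DecidableEq A]
    (P : A → Finset A → ℝ) (μQ : Measure ℝ) (π : A → ℝ) (a : A) : ℝ :=
  ∑ A' ∈ (Finset.univ.erase a).powerset,
    P a A' * Qfun μQ (piStar π A' - π a) * (gainMin P μQ π A' - gain P μQ π a)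

/-- The aggregate first-order gain `G(x)[π] = Σ_a x_a g_{a*}[π]`. -/
noncomputable def Gagg {A : Type*} [Fintype A] [DecidableEq A]
    (P : A → Finset A → ℝ) (μQ : Measure ℝ) (x π : A → ℝ) : ℝ :=
  ∑ a : A, x a * gain P μQ π a

/-- The aggregate second-order gain `H(x)[π] = Σ_a x_a h_{a*}[π]`. -/
noncomputable def Hagg {A : Type*} [Fintype A] [DecidableEq A]
    (P : A → Finset A → ℝ) (μQ : Measure ℝ) (x π : A → ℝ) : ℝ :=
  ∑ a : A, x a * gain2 P μQ π a

/-- The set of Nash equilibria of a population game `F`. -/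
def NashSet {A : Type*} [Fintype A] [Nonempty A]
    (F : (A → ℝ) → (A → ℝ)) : Set (A → ℝ) :=
  {y | y ∈ stdSimplex ℝ A ∧
    ∀ a : A, 0 < y a → F y a = Finset.univ.sup' Finset.univ_nonempty (F y)}

/-!
At a Nash equilibrium every action used with positive mass is a best reply, and a best reply has
no profitable revision: by Q1 the revision cost `q` is almost surely nonnegative, so
`max (π_*(A') - π_a - q) 0` vanishes almost surely. Hence `g_{a*} = 0`, and likewise `h_{a*} = 0`
(the factor `Q(π_*(A') - π_a)` vanishes unless some `b ∈ A'` is also a best reply, in which case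
`g_{**}(A') = g_{b*} = 0`). So `G^F` and `H^F` vanish on `NE(F)`; since `G^F(x_t) > 0` for small
`t > 0` when its right derivative at a zero is positive, the path leaves `NE(F)` at once.
-/

lemma ae_nonneg_of_Qfun_neg_eq_zero {μQ : Measure ℝ} [IsFiniteMeasure μQ]
    (hQ : ∀ q : ℝ, q < 0 → Qfun μQ q = 0) : ∀ᵐ q ∂μQ, 0 ≤ q := by
  have hIic : ∀ q : ℝ, q < 0 → μQ (Set.Iic q) = 0 := fun q hq => by
    simpa [Qfun, ENNReal.toReal_eq_zero_iff, measure_ne_top] using hQ q hq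
  have hneg : ∀ n : ℕ, -(1 / ((n : ℝ) + 1)) < 0 := fun n => by
    simp only [neg_lt_zero]; positivity
  have hlim : Filter.Tendsto (fun n : ℕ => -(1 / ((n : ℝ) + 1))) Filter.atTop (nhds 0) := by
    simpa using (tendsto_one_div_add_atTop_nhds_zero_nat (𝕜 := ℝ)).neg
  have hIio : μQ (Set.Iio 0) = 0 := by
    rw [← iUnion_Iic_eq_Iio_of_lt_of_tendsto hneg hlim]
    exact measure_iUnion_null fun n => hIic _ (hneg n)
  filter_upwards [measure_eq_zero_iff_ae_notMem.mp hIio] with q hq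
  simpa using hq

lemma piStar_le {A : Type*} {π : A → ℝ} {S : Finset A} (hS : S.Nonempty) {c : ℝ}
    (h : ∀ b ∈ S, π b ≤ c) : piStar π S ≤ c := by
  rw [piStar, dif_pos hS]
  exact Finset.sup'_le hS π h

section Gains

variable {A : Type*} [Fintype A] [DecidableEq A] {P : A → Finset A → ℝ} {μQ : Measure ℝ}
  {π : A → ℝ}

lemma gain_nonneg (hPnn : ∀ a A', 0 ≤ P a A') (a : A) : 0 ≤ gain P μQ π a :=
  Finset.sum_nonneg fun A' _ =>
    mul_nonneg (hPnn a A') (integral_nonneg fun _ => le_max_right _ _)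

lemma gain_eq_zero_of_forall_le [IsFiniteMeasure μQ] (hPempty : ∀ a, P a ∅ = 0)
    (hQ : ∀ q : ℝ, q < 0 → Qfun μQ q = 0) {a : A} (hmax : ∀ b, π b ≤ π a) :
    gain P μQ π a = 0 := by
  refine Finset.sum_eq_zero fun A' _ => ?_
  rcases A'.eq_empty_or_nonempty with rfl | hA'
  · simp [hPempty]
  have hle : piStar π A' ≤ π a := piStar_le hA' fun b _ => hmax b
  have hzero : (fun q => max (piStar π A' - π a - q) 0) =ᵐ[μQ] fun _ => 0 := by
    filter_upwards [ae_nonneg_of_Qfun_neg_eq_zero hQ] with q hq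
    exact max_eq_right (by linarith)
  rw [integral_congr_ae hzero, integral_zero, mul_zero]

lemma gainMin_eq_zero_of_forall_le [IsFiniteMeasure μQ] (hPnn : ∀ a A', 0 ≤ P a A')
    (hPempty : ∀ a, P a ∅ = 0) (hQ : ∀ q : ℝ, q < 0 → Qfun μQ q = 0) {S : Finset A} {b : A}
    (hb : b ∈ S) (hmax : ∀ c, π c ≤ π b) : gainMin P μQ π S = 0 := by
  rw [gainMin, dif_pos ⟨b, hb⟩]
  refine le_antisymm ?_ (Finset.le_inf' _ _ fun c _ => gain_nonneg hPnn c)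
  calc S.inf' ⟨b, hb⟩ (gain P μQ π) ≤ gain P μQ π b := Finset.inf'_le _ hb
    _ = 0 := gain_eq_zero_of_forall_le hPempty hQ hmax

lemma gain2_eq_zero_of_forall_le [IsFiniteMeasure μQ] (hPnn : ∀ a A', 0 ≤ P a A')
    (hPempty : ∀ a, P a ∅ = 0) (hQ : ∀ q : ℝ, q < 0 → Qfun μQ q = 0) {a : A}
    (hmax : ∀ b, π b ≤ π a) : gain2 P μQ π a = 0 := by
  refine Finset.sum_eq_zero fun A' _ => ?_
  rcases A'.eq_empty_or_nonempty with rfl | hA'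
  · simp [hPempty]
  rcases (piStar_le hA' fun b _ => hmax b).lt_or_eq with hlt | heq
  · rw [hQ _ (by linarith), mul_zero, zero_mul]
  obtain ⟨b, hb, hbmax⟩ := Finset.exists_mem_eq_sup' hA' π
  have hπb : π b = π a := by rw [← heq, piStar, dif_pos hA', hbmax]
  rw [gainMin_eq_zero_of_forall_le hPnn hPempty hQ hb (hπb ▸ hmax),
    gain_eq_zero_of_forall_le hPempty hQ hmax, sub_zero, mul_zero]

end Gains

lemma le_of_mem_NashSet {A : Type*} [Fintype A] [Nonempty A] {F : (A → ℝ) → (A → ℝ)}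
    {y : A → ℝ} (hy : y ∈ NashSet F) {a : A} (ha : 0 < y a) (b : A) : F y b ≤ F y a :=
  hy.2 a ha ▸ Finset.le_sup' (F y) (Finset.mem_univ b)

lemma sum_mul_eq_zero_of_mem_NashSet {A : Type*} [Fintype A] [Nonempty A]
    {F : (A → ℝ) → (A → ℝ)} {y : A → ℝ} (hy : y ∈ NashSet F) {f : A → ℝ}
    (hf : ∀ a, (∀ b, F y b ≤ F y a) → f a = 0) : ∑ a, y a * f a = 0 := by
  refine Finset.sum_eq_zero fun a _ => ?_
  rcases (hy.1.1 a).eq_or_lt with h0 | hpos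
  · rw [← h0, zero_mul]
  · rw [hf a (le_of_mem_NashSet hy hpos), mul_zero]

lemma exists_Ioc_forall_lt_of_hasDerivWithinAt_Ici {f : ℝ → ℝ} {v a : ℝ}
    (hd : HasDerivWithinAt f v (Set.Ici a) a) (hv : 0 < v) :
    ∃ T, a < T ∧ ∀ t ∈ Set.Ioc a T, f a < f t := by
  have hslope : Filter.Tendsto (slope f a) (nhdsWithin a (Set.Ioi a)) (nhds v) :=
    (hasDerivWithinAt_iff_tendsto_slope' Set.self_notMem_Ioi).mp
      (hasDerivWithinAt_Ioi_iff_Ici.mpr hd)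
  obtain ⟨T, hT, hsub⟩ :=
    mem_nhdsGT_iff_exists_Ioc_subset.mp (hslope.eventually (eventually_gt_nhds hv))
  refine ⟨T, hT, fun t ht => ?_⟩
  have hpos : 0 < (f t - f a) / (t - a) := by simpa [slope_def_field] using hsub ht
  linarith [(div_pos_iff_of_pos_right (sub_pos.mpr ht.1)).mp hpos]

theorem stmt15_general {A : Type*} [Fintype A] [DecidableEq A] [Nonempty A]
    (P : A → Finset A → ℝ) (μQ : Measure ℝ) [IsProbabilityMeasure μQ]
    (hPnn : ∀ a A', 0 ≤ P a A')
    (hPempty : ∀ a, P a (∅ : Finset A) = 0)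
    -- Assumption Q1
    (hQ1a : ∀ q : ℝ, q < 0 → Qfun μQ q = 0)
    (F : (A → ℝ) → (A → ℝ))
    (xstar : A → ℝ) (hxstar : xstar ∈ NashSet F) :
    Gagg P μQ xstar (F xstar) = 0 ∧
    Hagg P μQ xstar (F xstar) = 0 ∧
    ∀ x : ℝ → A → ℝ, ContinuousOn x (Set.Ici 0) →
      (∀ t : ℝ, 0 ≤ t → x t ∈ stdSimplex ℝ A) → x 0 = xstar →
      ∀ v : ℝ, 0 < v →
        HasDerivWithinAt (fun t => Gagg P μQ (x t) (F (x t))) v (Set.Ici 0) 0 →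
        ∃ T : ℝ, 0 < T ∧ ∀ t ∈ Set.Ioc (0 : ℝ) T, x t ∉ NashSet F := by
  have hG : ∀ y ∈ NashSet F, Gagg P μQ y (F y) = 0 := fun y hy =>
    sum_mul_eq_zero_of_mem_NashSet hy fun _ => gain_eq_zero_of_forall_le hPempty hQ1a
  refine ⟨hG xstar hxstar,
    sum_mul_eq_zero_of_mem_NashSet hxstar fun _ => gain2_eq_zero_of_forall_le hPnn hPempty hQ1a,
    fun x _ _ hx0 v hv hd => ?_⟩
  obtain ⟨T, hT, hlt⟩ := exists_Ioc_forall_lt_of_hasDerivWithinAt_Ici hd hv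
  refine ⟨T, hT, fun t ht hNash => ?_⟩
  have h := hlt t ht
  rw [hx0, hG xstar hxstar, hG (x t) hNash] at h
  exact lt_irrefl 0 h

/-- At a Nash equilibrium, `G^F = 0` and `H^F = 0`; and if a path starting at a Nash
equilibrium has a strictly positive right derivative of `G^F` at time `0`, then the
path stays away from the Nash equilibrium set on some interval `(0, T]`. -/
theorem stmt15 {A : Type*} [Fintype A] [DecidableEq A] [Nonempty A]
    (P : A → Finset A → ℝ) (μQ : Measure ℝ) [IsProbabilityMeasure μQ]
    (hPnn : ∀ a A', 0 ≤ P a A')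
    (hPsupp : ∀ a A', ¬ A' ⊆ Finset.univ.erase a → P a A' = 0)
    (hPempty : ∀ a, P a (∅ : Finset A) = 0)
    (hPsum : ∀ a, ∑ A' ∈ (Finset.univ.erase a).powerset, P a A' = 1)
    -- Assumption Q1
    (hQ1a : ∀ q : ℝ, q < 0 → Qfun μQ q = 0)
    (hQ1b : ∀ q : ℝ, 0 < q → 0 < Qfun μQ q)
    -- Assumption A1-i
    (hA1i : ∀ a b : A, b ≠ a →
      0 < ∑ A' ∈ (Finset.univ.erase a).powerset.filter (fun A' => b ∈ A'), P a A')
    -- Assumption A1-ii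
    (hA1ii : ∀ a b : A, ∀ S : Finset A, S ⊆ Finset.univ \ {a, b} →
      ∑ A' ∈ (Finset.univ.erase a).powerset.filter (fun A' => (A' ∩ S).Nonempty), P a A'
        = ∑ A' ∈ (Finset.univ.erase b).powerset.filter (fun A' => (A' ∩ S).Nonempty), P b A')
    -- a continuous population game
    (F : (A → ℝ) → (A → ℝ)) (hFcont : ContinuousOn F (stdSimplex ℝ A))
    (xstar : A → ℝ) (hxstar : xstar ∈ NashSet F) :
    Gagg P μQ xstar (F xstar) = 0 ∧
    Hagg P μQ xstar (F xstar) = 0 ∧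
    ∀ x : ℝ → A → ℝ, ContinuousOn x (Set.Ici 0) →
      (∀ t : ℝ, 0 ≤ t → x t ∈ stdSimplex ℝ A) → x 0 = xstar →
      ∀ v : ℝ, 0 < v →
        HasDerivWithinAt (fun t => Gagg P μQ (x t) (F (x t))) v (Set.Ici 0) 0 →
        ∃ T : ℝ, 0 < T ∧ ∀ t ∈ Set.Ioc (0 : ℝ) T, x t ∉ NashSet F :=
  stmt15_general P μQ hPnn hPempty hQ1a F xstar hxstar
end

section
/- (Stationarity is equivalent to Nash equilibrium) Assume Q1 and A1-i. For every x ∈ Δ^𝒜 and every π ∈ ℝ^𝒜, one has 0 ∈ V(x)[π] if and only if every a ∈ 𝒜 with x_a > 0 satisfies π_a = max_{b∈𝒜} π_b. In particular, for any population game F, 0 ∈ V(x)[F(x)] if and only if x ∈ NE(F). -/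
open MeasureTheory Finset
open scoped Classical

/-- The set of optimal actions in `S`: `b_*[π](S)`. -/
noncomputable def bStar {A : Type*} (π : A → ℝ) (S : Finset A) : Finset A :=
  S.filter (fun b => π b = piStar π S)

/-- `Q₋(q) = μ_Q((-∞, q))`. -/
noncomputable def Qminus (μQ : Measure ℝ) (q : ℝ) : ℝ := (μQ (Set.Iio q)).toReal

/-- `z` is an admissible transition vector for `a` at `π`. -/
def IsAdmissible {A : Type*} [Fintype A] [DecidableEq A]
    (P : A → Finset A → ℝ) (μQ : Measure ℝ) (π : A → ℝ) (a : A) (z : A → ℝ) : Prop :=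
  ∃ (y : Finset A → A → ℝ) (ρ : Finset A → ℝ),
    (∀ A' ∈ (Finset.univ.erase a).powerset, A'.Nonempty →
      y A' ∈ stdSimplex ℝ A ∧ (∀ b, y A' b ≠ 0 → b ∈ bStar π A') ∧
      ρ A' ∈ Set.Icc (Qminus μQ (piStar π A' - π a)) (Qfun μQ (piStar π A' - π a))) ∧
    z = fun b => ∑ A' ∈ (Finset.univ.erase a).powerset,
      P a A' * ρ A' * (y A' b - (if b = a then (1 : ℝ) else 0))

/-- The evolutionary dynamic: the set `V(x)[π]` of feasible transition vectors. -/
def Vset {A : Type*} [Fintype A] [DecidableEq A]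
    (P : A → Finset A → ℝ) (μQ : Measure ℝ) (x π : A → ℝ) : Set (A → ℝ) :=
  {Δx | ∃ z : A → A → ℝ, (∀ a, IsAdmissible P μQ π a (z a)) ∧
    Δx = fun b => ∑ a : A, x a * z a b}

/-!
Pair a transition vector with the payoff vector `π`. For an admissible `z_a` this gives
`∑_{A'} ℙ(A') ρ(A') (π_*(A') - π_a)`, and each summand is nonnegative because by Q1 a revision
rate can only be positive when the gap is nonnegative. Summing against `x`, a stationary state
makes the total vanish, so every used action has zero expected gain; by A1-i and Q1 a suboptimal
action has positive gain (it samples the best action with positive probability). Conversely, at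
an optimal action every gap is `≤ 0`, so the rate `Q₋(gap) = 0` yields the zero transition.
-/

open Filter Topology

lemma measure_Iio_eq_zero_of_forall_lt {μ : Measure ℝ} {q : ℝ}
    (h : ∀ q' < q, μ (Set.Iic q') = 0) : μ (Set.Iio q) = 0 := by
  have hlt : ∀ n : ℕ, q - 1 / ((n : ℝ) + 1) < q := fun n => by
    have : (0 : ℝ) < 1 / ((n : ℝ) + 1) := by positivity
    linarith
  have hlim : Tendsto (fun n : ℕ => q - 1 / ((n : ℝ) + 1)) atTop (𝓝 q) := by
    simpa using (tendsto_const_nhds (x := q)).sub tendsto_one_div_add_atTop_nhds_zero_nat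
  rw [← iUnion_Iic_eq_Iio_of_lt_of_tendsto hlt hlim]
  exact measure_iUnion_null fun n => h _ (hlt n)

section CDF

variable {μQ : Measure ℝ}

lemma Qminus_nonneg (q : ℝ) : 0 ≤ Qminus μQ q := ENNReal.toReal_nonneg

lemma mul_nonneg_of_mem_Icc_Qminus_Qfun (hQ : ∀ q < 0, Qfun μQ q = 0) {r d : ℝ}
    (hr : r ∈ Set.Icc (Qminus μQ d) (Qfun μQ d)) : 0 ≤ r * d := by
  have hr₀ : 0 ≤ r := (Qminus_nonneg d).trans hr.1
  rcases lt_or_ge d 0 with hd | hd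
  · simp [le_antisymm (hr.2.trans (hQ d hd).le) hr₀]
  · exact mul_nonneg hr₀ hd

variable [IsFiniteMeasure μQ]

lemma Qminus_le_Qfun (q : ℝ) : Qminus μQ q ≤ Qfun μQ q :=
  ENNReal.toReal_mono (measure_ne_top _ _) (measure_mono Set.Iio_subset_Iic_self)

lemma Qfun_le_Qminus_of_lt {q' q : ℝ} (h : q' < q) : Qfun μQ q' ≤ Qminus μQ q :=
  ENNReal.toReal_mono (measure_ne_top _ _) (measure_mono fun _ ht => lt_of_le_of_lt ht h)

lemma Qminus_eq_zero_of_nonpos (hQ : ∀ q < 0, Qfun μQ q = 0) {q : ℝ} (hq : q ≤ 0) :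
    Qminus μQ q = 0 := by
  have hIic : ∀ q' < q, μQ (Set.Iic q') = 0 := fun q' hq' =>
    (ENNReal.toReal_eq_zero_iff _).1 (hQ q' (hq'.trans_le hq)) |>.resolve_right
      (measure_ne_top _ _)
  rw [Qminus, measure_Iio_eq_zero_of_forall_lt hIic, ENNReal.toReal_zero]

lemma Qminus_pos (hQ : ∀ q, 0 < q → 0 < Qfun μQ q) {q : ℝ} (hq : 0 < q) :
    0 < Qminus μQ q :=
  (hQ (q / 2) (half_pos hq)).trans_le (Qfun_le_Qminus_of_lt (half_lt_self hq))

end CDF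

section Best

variable {A : Type*} {π : A → ℝ} {S : Finset A}

lemma le_piStar {b : A} (hb : b ∈ S) : π b ≤ piStar π S := by
  rw [piStar, dif_pos ⟨b, hb⟩]
  exact le_sup' π hb

lemma piStar_le_of_forall_le (hS : S.Nonempty) {c : ℝ} (h : ∀ b ∈ S, π b ≤ c) :
    piStar π S ≤ c := by
  rw [piStar, dif_pos hS]
  exact sup'_le hS π h

lemma bStar_nonempty (hS : S.Nonempty) : (bStar π S).Nonempty := by
  obtain ⟨b, hb, hbmax⟩ := exists_mem_eq_sup' hS π
  exact ⟨b, mem_filter.2 ⟨hb, by rw [piStar, dif_pos hS, hbmax]⟩⟩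

lemma sum_mul_eq_piStar [Fintype A] {y : A → ℝ} (hy : y ∈ stdSimplex ℝ A)
    (hsupp : ∀ b, y b ≠ 0 → b ∈ bStar π S) : ∑ b, π b * y b = piStar π S := by
  have hterm : ∀ b ∈ univ, π b * y b = piStar π S * y b := fun b _ => by
    by_cases h : y b = 0
    · simp [h]
    · rw [(mem_filter.1 (hsupp b h)).2]
  rw [sum_congr rfl hterm, ← mul_sum, hy.2, mul_one]

end Best

section Admissible

variable {A : Type*} [Fintype A] [DecidableEq A] {P : A → Finset A → ℝ} {μQ : Measure ℝ}
  {π : A → ℝ} {a : A}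

lemma IsAdmissible.exists_payoff_gain_eq (hPempty : P a ∅ = 0) {z : A → ℝ}
    (hz : IsAdmissible P μQ π a z) :
    ∃ ρ : Finset A → ℝ,
      (∀ A' ∈ (univ.erase a).powerset, A'.Nonempty →
        ρ A' ∈ Set.Icc (Qminus μQ (piStar π A' - π a)) (Qfun μQ (piStar π A' - π a))) ∧
      ∑ b, π b * z b =
        ∑ A' ∈ (univ.erase a).powerset, P a A' * ρ A' * (piStar π A' - π a) := by
  obtain ⟨y, ρ, hyρ, rfl⟩ := hz
  refine ⟨ρ, fun A' hA' hne => (hyρ A' hA' hne).2.2, ?_⟩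
  simp_rw [mul_sum]
  rw [sum_comm]
  refine sum_congr rfl fun A' hA' => ?_
  rcases A'.eq_empty_or_nonempty with rfl | hne
  · simp [hPempty]
  obtain ⟨hy, hsupp, -⟩ := hyρ A' hA' hne
  have hexpand : ∀ b ∈ univ, π b * (P a A' * ρ A' * (y A' b - if b = a then 1 else 0)) =
      P a A' * ρ A' * (π b * y A' b - if b = a then π b else 0) := fun b _ => by
    split_ifs <;> ring
  rw [sum_congr rfl hexpand, ← mul_sum, sum_sub_distrib, sum_mul_eq_piStar hy hsupp,
    sum_ite_eq' univ a π, if_pos (mem_univ a)]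

lemma gap_term_nonneg (hPnn : ∀ A', 0 ≤ P a A') (hPempty : P a ∅ = 0)
    (hQ : ∀ q < 0, Qfun μQ q = 0) {ρ : Finset A → ℝ}
    (hρ : ∀ A' ∈ (univ.erase a).powerset, A'.Nonempty →
      ρ A' ∈ Set.Icc (Qminus μQ (piStar π A' - π a)) (Qfun μQ (piStar π A' - π a)))
    {A' : Finset A} (hA' : A' ∈ (univ.erase a).powerset) :
    0 ≤ P a A' * ρ A' * (piStar π A' - π a) := by
  rcases A'.eq_empty_or_nonempty with rfl | hne
  · simp [hPempty]
  · rw [mul_assoc]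
    exact mul_nonneg (hPnn A') (mul_nonneg_of_mem_Icc_Qminus_Qfun hQ (hρ A' hA' hne))

lemma IsAdmissible.payoff_gain_nonneg (hPnn : ∀ A', 0 ≤ P a A') (hPempty : P a ∅ = 0)
    (hQ : ∀ q < 0, Qfun μQ q = 0) {z : A → ℝ} (hz : IsAdmissible P μQ π a z) :
    0 ≤ ∑ b, π b * z b := by
  obtain ⟨ρ, hρ, hgain⟩ := hz.exists_payoff_gain_eq hPempty
  rw [hgain]
  exact sum_nonneg fun A' hA' => gap_term_nonneg hPnn hPempty hQ hρ hA'

lemma IsAdmissible.payoff_gain_pos [IsFiniteMeasure μQ] (hPnn : ∀ A', 0 ≤ P a A')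
    (hPempty : P a ∅ = 0) (hQa : ∀ q < 0, Qfun μQ q = 0) (hQb : ∀ q, 0 < q → 0 < Qfun μQ q)
    (hA1i : ∀ b, b ≠ a → 0 < ∑ A' ∈ (univ.erase a).powerset.filter (fun A' => b ∈ A'), P a A')
    {c : A} (hc : π a < π c) {z : A → ℝ} (hz : IsAdmissible P μQ π a z) :
    0 < ∑ b, π b * z b := by
  obtain ⟨ρ, hρ, hgain⟩ := hz.exists_payoff_gain_eq hPempty
  obtain ⟨A', hA'c, hPA'⟩ := exists_ne_zero_of_sum_ne_zero (hA1i c (by rintro rfl; simp at hc)).ne'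
  obtain ⟨hA', hcA'⟩ := mem_filter.1 hA'c
  have hgap : 0 < piStar π A' - π a := by linarith [le_piStar (π := π) hcA']
  have hρpos : 0 < ρ A' := (Qminus_pos hQb hgap).trans_le (hρ A' hA' ⟨c, hcA'⟩).1
  rw [hgain]
  refine sum_pos' (fun A' hA' => gap_term_nonneg hPnn hPempty hQa hρ hA') ⟨A', hA', ?_⟩
  exact mul_pos (mul_pos ((hPnn A').lt_of_ne' hPA') hρpos) hgap

lemma exists_isAdmissible_eq_zero_of_forall_le [IsFiniteMeasure μQ] (hPempty : P a ∅ = 0)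
    (hQ : ∀ q < 0, Qfun μQ q = 0) :
    ∃ z, IsAdmissible P μQ π a z ∧ ((∀ b, π b ≤ π a) → z = 0) := by
  have hpick : ∀ S : Finset A, ∃ b, S.Nonempty → b ∈ bStar π S := fun S =>
    if hS : S.Nonempty then (bStar_nonempty hS).imp fun _ hb _ => hb else ⟨a, fun h => absurd h hS⟩
  choose pick hpick using hpick
  refine ⟨_, ⟨fun A' => Pi.single (pick A') 1, fun A' => Qminus μQ (piStar π A' - π a),
    fun A' _ hne => ⟨single_mem_stdSimplex ℝ _, fun b hb => ?_, le_rfl, Qminus_le_Qfun _⟩, rfl⟩,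
    fun hopt => ?_⟩
  · obtain rfl : b = pick A' := by
      by_contra h
      exact hb (by simp [h])
    exact hpick A' hne
  · funext b
    refine sum_eq_zero fun A' _ => ?_
    rcases A'.eq_empty_or_nonempty with rfl | hne
    · simp [hPempty]
    · beta_reduce
      rw [Qminus_eq_zero_of_nonpos hQ (sub_nonpos.2 (piStar_le_of_forall_le hne fun b _ => hopt b)),
        mul_zero, zero_mul]

end Admissible

theorem stmt16_general {A : Type*} [Fintype A] [DecidableEq A] [Nonempty A]
    (P : A → Finset A → ℝ) (μQ : Measure ℝ) [IsProbabilityMeasure μQ]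
    (hPnn : ∀ a A', 0 ≤ P a A')
    (hPempty : ∀ a, P a (∅ : Finset A) = 0)
    -- Assumption Q1
    (hQ1a : ∀ q : ℝ, q < 0 → Qfun μQ q = 0)
    (hQ1b : ∀ q : ℝ, 0 < q → 0 < Qfun μQ q)
    -- Assumption A1-i
    (hA1i : ∀ a b : A, b ≠ a →
      0 < ∑ A' ∈ (Finset.univ.erase a).powerset.filter (fun A' => b ∈ A'), P a A')
    (x : A → ℝ) (hx : x ∈ stdSimplex ℝ A) (π : A → ℝ) :
    (0 : A → ℝ) ∈ Vset P μQ x π ↔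
      ∀ a : A, 0 < x a → π a = Finset.univ.sup' Finset.univ_nonempty π := by
  constructor
  · rintro ⟨z, hz, hzero⟩ a ha
    obtain ⟨c, -, hc⟩ := exists_mem_eq_sup' univ_nonempty π
    refine le_antisymm (le_sup' π (mem_univ a)) (hc ▸ not_lt.1 fun hac => ?_)
    have htotal : ∑ a', x a' * ∑ b, π b * z a' b = 0 := by
      simp_rw [mul_sum, mul_left_comm (x _)]
      rw [sum_comm]
      simp_rw [← mul_sum]
      exact sum_eq_zero fun b _ => by rw [← congrFun hzero b, Pi.zero_apply, mul_zero]
    have hgain := (sum_eq_zero_iff_of_nonneg fun a' _ => mul_nonneg (hx.1 a')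
      ((hz a').payoff_gain_nonneg (hPnn a') (hPempty a') hQ1a)).1 htotal a (mem_univ a)
    exact (mul_pos ha ((hz a).payoff_gain_pos (hPnn a) (hPempty a) hQ1a hQ1b (hA1i a) hac)).ne'
      hgain
  · intro hNash
    choose z hz hz0 using fun a =>
      exists_isAdmissible_eq_zero_of_forall_le (P := P) (μQ := μQ) (π := π) (hPempty a) hQ1a
    refine ⟨z, hz, funext fun b => (sum_eq_zero fun a _ => ?_).symm⟩
    rcases (hx.1 a).eq_or_lt with hxa | hxa
    · rw [← hxa, zero_mul]
    · rw [hz0 a fun b => (hNash a hxa).symm ▸ le_sup' π (mem_univ b), Pi.zero_apply, mul_zero]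

/-- Stationarity of the dynamic is equivalent to Nash equilibrium: `0 ∈ V(x)[π]` iff
every action in use is optimal (so, for a population game `F`, `0 ∈ V(x)[F(x)]` iff
`x ∈ NE(F)`). -/
theorem stmt16 {A : Type*} [Fintype A] [DecidableEq A] [Nonempty A]
    (P : A → Finset A → ℝ) (μQ : Measure ℝ) [IsProbabilityMeasure μQ]
    (hPnn : ∀ a A', 0 ≤ P a A')
    (hPsupp : ∀ a A', ¬ A' ⊆ Finset.univ.erase a → P a A' = 0)
    (hPempty : ∀ a, P a (∅ : Finset A) = 0)
    (hPsum : ∀ a, ∑ A' ∈ (Finset.univ.erase a).powerset, P a A' = 1)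
    -- Assumption Q1
    (hQ1a : ∀ q : ℝ, q < 0 → Qfun μQ q = 0)
    (hQ1b : ∀ q : ℝ, 0 < q → 0 < Qfun μQ q)
    -- Assumption A1-i
    (hA1i : ∀ a b : A, b ≠ a →
      0 < ∑ A' ∈ (Finset.univ.erase a).powerset.filter (fun A' => b ∈ A'), P a A')
    (x : A → ℝ) (hx : x ∈ stdSimplex ℝ A) (π : A → ℝ) :
    (0 : A → ℝ) ∈ Vset P μQ x π ↔
      ∀ a : A, 0 < x a → π a = Finset.univ.sup' Finset.univ_nonempty π :=
  stmt16_general P μQ hPnn hPempty hQ1a hQ1b hA1i x hx π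
end

section
/- Let F be the restriction to Δ^𝒜 of a continuously differentiable map defined on an open neighborhood of Δ^𝒜 in ℝ^𝒜, with derivative DF. Then F is a stable game if and only if z·DF(x)z ≤ 0 for all x ∈ Δ^𝒜 and all z ∈ TΔ^𝒜. -/
/-!
Along the segment `t ↦ x + t • (x' - x)` the derivative of `t ↦ (x' - x) ⬝ᵥ F (x + t • (x' - x))`
is `(x' - x) ⬝ᵥ DF (x' - x)`, so the mean value theorem turns negative semidefiniteness of `DF`
into stability. Conversely, for `x, y, y'` in the simplex the points `x + s • (y - x)` and
`x + s • (y' - x)` lie in the simplex and differ by `s • (y' - y)`; stability bounds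
`(y' - y) ⬝ᵥ (F (x + s • (y' - x)) - F (x + s • (y - x)))` by `0`, and differentiating at `s = 0`
gives `(y' - y) ⬝ᵥ DF(x) (y' - y) ≤ 0`. Splitting a tangent vector into its positive and negative
parts shows that it is a multiple of such a difference `y' - y`.
-/

open Finset Filter Set Topology

theorem HasDerivAt.nonpos_of_eventually_le {g : ℝ → ℝ} {g' a : ℝ} (hg : HasDerivAt g g' a)
    (hle : ∀ᶠ t in 𝓝[>] a, g t ≤ g a) : g' ≤ 0 := by
  refine le_of_tendsto ((hasDerivAt_iff_tendsto_slope.mp hg).mono_left (nhdsGT_le_nhdsNE a)) ?_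
  filter_upwards [hle, self_mem_nhdsWithin] with t ht hat
  rw [slope_def_field]
  exact div_nonpos_of_nonpos_of_nonneg (sub_nonpos.2 ht) (sub_nonneg.2 (le_of_lt hat))

section StableGame

variable {A : Type*} [Fintype A]

theorem HasFDerivAt.hasDerivAt_dotProduct_add_smul {Φ : (A → ℝ) → A → ℝ}
    {Φ' : (A → ℝ) →L[ℝ] A → ℝ} {x v w : A → ℝ} {t : ℝ} (hΦ : HasFDerivAt Φ Φ' (x + t • v)) :
    HasDerivAt (fun s : ℝ => w ⬝ᵥ Φ (x + s • v)) (w ⬝ᵥ Φ' v) t := by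
  have hline : HasDerivAt (fun s : ℝ => x + s • v) v t := by
    simpa using ((hasDerivAt_id t).smul_const v).const_add x
  have hcomp := hΦ.comp_hasDerivAt t hline
  exact HasDerivAt.fun_sum fun a _ => (hasDerivAt_pi.mp hcomp a).const_mul (w a)

theorem inv_sum_smul_mem_stdSimplex {v : A → ℝ} (hv : ∀ a, 0 ≤ v a) (hs : ∑ a, v a ≠ 0) :
    (∑ a, v a)⁻¹ • v ∈ stdSimplex ℝ A :=
  ⟨fun a => smul_nonneg (inv_nonneg.2 (sum_nonneg fun a _ => hv a)) (hv a), by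
    simp only [Pi.smul_apply, smul_eq_mul, ← mul_sum, inv_mul_cancel₀ hs]⟩

theorem exists_eq_smul_sub_of_sum_eq_zero {z : A → ℝ} (hz : ∑ a, z a = 0) (hz₀ : z ≠ 0) :
    ∃ m : ℝ, ∃ y ∈ stdSimplex ℝ A, ∃ y' ∈ stdSimplex ℝ A, z = m • (y' - y) := by
  set zp : A → ℝ := fun a => (z a)⁺
  set zn : A → ℝ := fun a => (z a)⁻
  have hdecomp : zp - zn = z := funext fun a => posPart_sub_negPart (z a)
  have hsum : ∑ a, zn a = ∑ a, zp a := by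
    have h := congrArg (fun v => ∑ a, v a) hdecomp
    simp only [Pi.sub_apply, sum_sub_distrib] at h
    linarith
  have hm : ∑ a, zp a ≠ 0 := by
    intro hm
    have hp : zp = 0 := funext fun a =>
      (sum_eq_zero_iff_of_nonneg fun a _ => posPart_nonneg (z a)).1 hm a (mem_univ a)
    have hn : zn = 0 := funext fun a =>
      (sum_eq_zero_iff_of_nonneg fun a _ => negPart_nonneg (z a)).1 (hsum.trans hm) a (mem_univ a)
    exact hz₀ (by rw [← hdecomp, hp, hn, sub_zero])
  refine ⟨∑ a, zp a,
    _, hsum ▸ inv_sum_smul_mem_stdSimplex (fun a => negPart_nonneg (z a)) (hsum ▸ hm),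
    _, inv_sum_smul_mem_stdSimplex (fun a => posPart_nonneg (z a)) hm, ?_⟩
  rw [← smul_sub, smul_inv_smul₀ hm, hdecomp]

def IsStableGameOn (S : Set (A → ℝ)) (Φ : (A → ℝ) → A → ℝ) : Prop :=
  ∀ x ∈ S, ∀ x' ∈ S, (x' - x) ⬝ᵥ (Φ x' - Φ x) ≤ 0

variable {S : Set (A → ℝ)} {Φ : (A → ℝ) → A → ℝ}

theorem IsStableGameOn.dotProduct_fderiv_sub_nonpos (hS : Convex ℝ S) (hΦ : IsStableGameOn S Φ)
    {Φ' : (A → ℝ) →L[ℝ] A → ℝ} {x y y' : A → ℝ} (hx : x ∈ S) (hd : HasFDerivAt Φ Φ' x)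
    (hy : y ∈ S) (hy' : y' ∈ S) : (y' - y) ⬝ᵥ Φ' (y' - y) ≤ 0 := by
  set w := y' - y
  set g : ℝ → ℝ := fun s => w ⬝ᵥ Φ (x + s • (y' - x)) - w ⬝ᵥ Φ (x + s • (y - x))
  have hd₀ : ∀ v, HasFDerivAt Φ Φ' (x + (0 : ℝ) • v) := fun v => by simpa using hd
  have hg : HasDerivAt g (w ⬝ᵥ Φ' w) 0 := by
    have h := ((hd₀ (y' - x)).hasDerivAt_dotProduct_add_smul (w := w)).sub
      ((hd₀ (y - x)).hasDerivAt_dotProduct_add_smul (w := w))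
    rwa [← dotProduct_sub, ← map_sub, sub_sub_sub_cancel_right] at h
  refine hg.nonpos_of_eventually_le ?_
  filter_upwards [Ioc_mem_nhdsGT one_pos] with s ⟨hs₀, hs₁⟩
  have hstable := hΦ _ (hS.add_smul_sub_mem hx hy ⟨hs₀.le, hs₁⟩)
    _ (hS.add_smul_sub_mem hx hy' ⟨hs₀.le, hs₁⟩)
  have hdiff : x + s • (y' - x) - (x + s • (y - x)) = s • w := by module
  rw [hdiff, smul_dotProduct, smul_eq_mul, dotProduct_sub] at hstable
  simpa [g] using nonpos_of_mul_nonpos_right hstable hs₀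

theorem isStableGameOn_of_dotProduct_fderiv_nonpos (hS : Convex ℝ S)
    (hd : ∀ x ∈ S, DifferentiableAt ℝ Φ x)
    (hnsd : ∀ x ∈ S, ∀ y ∈ S, ∀ y' ∈ S, (y' - y) ⬝ᵥ fderiv ℝ Φ x (y' - y) ≤ 0) :
    IsStableGameOn S Φ := by
  intro x hx x' hx'
  set w := x' - x
  have hseg : ∀ t ∈ Icc (0 : ℝ) 1, x + t • w ∈ S := fun t ht => hS.add_smul_sub_mem hx hx' ht
  have hder : ∀ t ∈ Icc (0 : ℝ) 1, HasDerivAt (fun s : ℝ => w ⬝ᵥ Φ (x + s • w))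
      (w ⬝ᵥ fderiv ℝ Φ (x + t • w) w) t := fun t ht =>
    (hd _ (hseg t ht)).hasFDerivAt.hasDerivAt_dotProduct_add_smul
  obtain ⟨c, hc, hslope⟩ := exists_hasDerivAt_eq_slope _ _ zero_lt_one
    (fun t ht => (hder t ht).continuousAt.continuousWithinAt)
    (fun t ht => hder t (Ioo_subset_Icc_self ht))
  have hmvt : w ⬝ᵥ (Φ x' - Φ x) = w ⬝ᵥ fderiv ℝ Φ (x + c • w) w := by
    rw [hslope, one_smul, zero_smul, add_zero, add_sub_cancel, sub_zero, div_one, dotProduct_sub]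
  rw [hmvt]
  exact hnsd _ (hseg c (Ioo_subset_Icc_self hc)) x hx x' hx'

end StableGame

theorem stmt17_general {A : Type*} [Fintype A]
    (U : Set (A → ℝ)) (hU : IsOpen U) (hΔU : stdSimplex ℝ A ⊆ U)
    (Φ : (A → ℝ) → (A → ℝ)) (hΦ : ContDiffOn ℝ 1 Φ U) :
    (∀ x ∈ stdSimplex ℝ A, ∀ x' ∈ stdSimplex ℝ A,
        ∑ a : A, (x' a - x a) * (Φ x' a - Φ x a) ≤ 0) ↔
      (∀ x ∈ stdSimplex ℝ A, ∀ z : A → ℝ, ∑ a : A, z a = 0 →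
        ∑ a : A, z a * (fderiv ℝ Φ x z) a ≤ 0) := by
  have hd : ∀ x ∈ stdSimplex ℝ A, DifferentiableAt ℝ Φ x := fun x hx =>
    (hΦ.differentiableOn one_ne_zero).differentiableAt (hU.mem_nhds (hΔU hx))
  constructor
  · intro hstable x hx z hz
    rcases eq_or_ne z 0 with rfl | hz₀
    · simp
    obtain ⟨m, y, hy, y', hy', rfl⟩ := exists_eq_smul_sub_of_sum_eq_zero hz hz₀
    have hnsd := IsStableGameOn.dotProduct_fderiv_sub_nonpos (convex_stdSimplex ℝ A) hstable hx
      (hd x hx).hasFDerivAt hy hy'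
    change m • (y' - y) ⬝ᵥ fderiv ℝ Φ x (m • (y' - y)) ≤ 0
    rw [map_smul, smul_dotProduct, dotProduct_smul, smul_eq_mul, smul_eq_mul, ← mul_assoc]
    exact mul_nonpos_of_nonneg_of_nonpos (mul_self_nonneg m) hnsd
  · intro hnsd
    refine isStableGameOn_of_dotProduct_fderiv_nonpos (convex_stdSimplex ℝ A) hd ?_
    intro x hx y hy y' hy'
    exact hnsd x hx _ (by simp [sum_sub_distrib, hy.2, hy'.2])

/-- A population game `F` — the restriction to the simplex `Δ^𝒜` of a continuously
differentiable map `Φ` defined on an open neighborhood `U` of `Δ^𝒜` — is a stable game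
if and only if its Jacobian `DF(x)` is negative semidefinite with respect to the
tangent space `TΔ^𝒜 = {z : Σ_a z_a = 0}` at every `x ∈ Δ^𝒜`. -/
theorem stmt17 {A : Type*} [Fintype A] [Nonempty A]
    (U : Set (A → ℝ)) (hU : IsOpen U) (hΔU : stdSimplex ℝ A ⊆ U)
    (Φ : (A → ℝ) → (A → ℝ)) (hΦ : ContDiffOn ℝ 1 Φ U) :
    (∀ x ∈ stdSimplex ℝ A, ∀ x' ∈ stdSimplex ℝ A,
        ∑ a : A, (x' a - x a) * (Φ x' a - Φ x a) ≤ 0) ↔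
      (∀ x ∈ stdSimplex ℝ A, ∀ z : A → ℝ, ∑ a : A, z a = 0 →
        ∑ a : A, z a * (fderiv ℝ Φ x z) a ≤ 0) :=
  stmt17_general U hU hΔU Φ hΦ
end

section
/- (Gains in the birth–death / excess-payoff framework) Assume Q1 and A1-i' and that μ_Q is atomless. Then: (a) H(x)[π] ≤ 0 for all x ∈ Δ^𝒜 and π ∈ ℝ^𝒜, with H(x)[π] = 0 if and only if every a ∈ 𝒜 with x_a > 0 satisfies π_a = max_{b∈𝒜} π_b; (b) for any family (y(A')) with each y(A') ∈ Δ^𝒜 supported on b_*[π](A'), the vector Δx := Σ_{∅≠A'⊆𝒜} ℙ_𝒜(A') · Q(π̂_*(A')) · (y(A') − x) is such that the function t ↦ G(x + tΔx)[π] has a right derivative at t = 0 equal to H(x)[π]. -/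
/-!
Write `F(s) = ∫ (s - q)⁺ dμ_Q`. Differentiating under the integral, `F' = Q` at every point
that is not an atom of `μ_Q`. Along the line `x + tΔx` every excess payoff moves with the same
speed `-π·Δx`, and `π·Δx = Σ ℙ(A') Q(π̂_*(A')) π̂_*(A')` because each `y(A')` is carried by the
optimal actions of `A'`; the chain rule then yields `H`.

For (a), `Q` vanishes on `(-∞, 0]` (Q1 plus no atom at `0`), so both factors of `H` are
nonnegative, and `H = 0` iff no `A'` of positive probability has positive excess payoff. By A1-i'
some such `A'` contains a best action, so this says `π·x = max π`, i.e. `x` is carried by best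
actions.
-/

open MeasureTheory Finset
open scoped Classical

/-- The excess payoff of the best available action: `π̂_*(A') = π_*(A') - π·x`. -/
noncomputable def excess {A : Type*} [Fintype A]
    (x π : A → ℝ) (S : Finset A) : ℝ :=
  piStar π S - ∑ a : A, π a * x a

/-- The aggregate first-order gain in the birth–death (excess-payoff) framework. -/
noncomputable def Gbd {A : Type*} [Fintype A]
    (PA : Finset A → ℝ) (μQ : Measure ℝ) (x π : A → ℝ) : ℝ :=
  ∑ A' ∈ (Finset.univ : Finset A).powerset,
    PA A' * ∫ q, max (excess x π A' - q) 0 ∂μQ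

/-- The decaying rate function in the birth–death (excess-payoff) framework. -/
noncomputable def Hbd {A : Type*} [Fintype A]
    (PA : Finset A → ℝ) (μQ : Measure ℝ) (x π : A → ℝ) : ℝ :=
  -(∑ A' ∈ (Finset.univ : Finset A).powerset, PA A' * Qfun μQ (excess x π A')) *
    (∑ A' ∈ (Finset.univ : Finset A).powerset,
      PA A' * Qfun μQ (excess x π A') * excess x π A')

section ExcessIntegral

variable (μ : Measure ℝ)

lemma Qfun_nonneg (q : ℝ) : 0 ≤ Qfun μ q := ENNReal.toReal_nonneg

lemma measure_Iio_zero_eq_zero [IsFiniteMeasure μ] (hQ : ∀ q : ℝ, q < 0 → Qfun μ q = 0) :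
    μ (Set.Iio 0) = 0 := by
  have hlim : Filter.Tendsto (fun n : ℕ => -(1 / ((n : ℝ) + 1))) Filter.atTop (nhds 0) := by
    simpa using (tendsto_one_div_add_atTop_nhds_zero_nat (𝕜 := ℝ)).neg
  have hneg : ∀ n : ℕ, -(1 / ((n : ℝ) + 1)) < 0 := fun n => neg_neg_of_pos (by positivity)
  rw [← iUnion_Iic_eq_Iio_of_lt_of_tendsto hneg hlim, measure_iUnion_null_iff]
  exact fun n => (ENNReal.toReal_eq_zero_iff _).mp (hQ _ (hneg n)) |>.resolve_right
    (measure_ne_top μ _)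

lemma measure_Iic_zero_eq_zero [IsFiniteMeasure μ] (hQ : ∀ q : ℝ, q < 0 → Qfun μ q = 0)
    (h0 : μ {0} = 0) : μ (Set.Iic 0) = 0 := by
  rw [← Set.Iio_union_right]
  exact measure_union_null (measure_Iio_zero_eq_zero μ hQ) h0

lemma Qfun_eq_zero_of_nonpos [IsFiniteMeasure μ] (hQ : ∀ q : ℝ, q < 0 → Qfun μ q = 0)
    (h0 : μ {0} = 0) {q : ℝ} (hq : q ≤ 0) : Qfun μ q = 0 := by
  rw [Qfun, measure_mono_null (Set.Iic_subset_Iic.mpr hq) (measure_Iic_zero_eq_zero μ hQ h0),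
    ENNReal.toReal_zero]

lemma integrable_max_sub_const [IsFiniteMeasure μ] (hpos : ∀ᵐ q ∂μ, 0 ≤ q) (r : ℝ) :
    Integrable (fun q => max (r - q) 0) μ := by
  refine Integrable.mono' (integrable_const (max r 0)) (by fun_prop) ?_
  filter_upwards [hpos] with q hq
  rw [Real.norm_eq_abs, abs_of_nonneg (le_max_right _ _)]
  exact max_le_max (by linarith) le_rfl

lemma hasDerivAt_max_sub_const {q r : ℝ} (hqr : q ≠ r) :
    HasDerivAt (fun s => max (s - q) 0) ((Set.Iio r).indicator 1 q) r := by
  rcases hqr.lt_or_gt with h | h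
  · rw [Set.indicator_of_mem (Set.mem_Iio.mpr h)]
    refine ((hasDerivAt_id r).sub_const q).congr_of_eventuallyEq ?_
    filter_upwards [lt_mem_nhds h] with s hs
    exact max_eq_left (sub_nonneg.mpr hs.le)
  · rw [Set.indicator_of_notMem (by simpa using h.le)]
    refine (hasDerivAt_const r (0 : ℝ)).congr_of_eventuallyEq ?_
    filter_upwards [gt_mem_nhds h] with s hs
    exact max_eq_right (sub_nonpos.mpr hs.le)

theorem hasDerivAt_integral_max_sub [IsFiniteMeasure μ] {r : ℝ}
    (hint : Integrable (fun q => max (r - q) 0) μ) (hr : μ {r} = 0) :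
    HasDerivAt (fun s => ∫ q, max (s - q) 0 ∂μ) (Qfun μ r) r := by
  have hlip : ∀ q : ℝ, LipschitzWith 1 (fun s : ℝ => max (s - q) 0) := fun q =>
    ((LipschitzWith.id.sub (LipschitzWith.const q)).weaken (by simp)).max_const 0
  -- The only point of nondifferentiability, `q = r`, is a null event since `r` is not an atom.
  have hdiff : ∀ᵐ q ∂μ, HasDerivAt (fun s => max (s - q) 0) ((Set.Iio r).indicator 1 q) r := by
    filter_upwards [measure_eq_zero_iff_ae_notMem.mp hr] with q hq
    exact hasDerivAt_max_sub_const hq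
  have key := (hasDerivAt_integral_of_dominated_loc_of_lip (bound := fun _ => (1 : ℝ))
    Filter.univ_mem (Filter.Eventually.of_forall fun s => by fun_prop) hint
    ((measurable_one.indicator measurableSet_Iio).aestronglyMeasurable)
    (Filter.Eventually.of_forall fun q => by simpa using (hlip q).lipschitzOnWith (s := Set.univ))
    (integrable_const 1) hdiff).2
  rwa [integral_indicator_one measurableSet_Iio, measureReal_congr (Iio_ae_eq_Iic' hr)] at key

end ExcessIntegral

section Payoffs

variable {A : Type*} [Fintype A]

lemma sum_mul_eq_of_forall_ne_zero {π y : A → ℝ} {c : ℝ} (hy : ∑ a, y a = 1)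
    (h : ∀ a, y a ≠ 0 → π a = c) : ∑ a, π a * y a = c := by
  have hterm : ∀ a ∈ (Finset.univ : Finset A), π a * y a = c * y a := fun a _ => by
    by_cases ha : y a = 0
    · simp [ha]
    · rw [h a ha]
  rw [Finset.sum_congr rfl hterm, ← Finset.mul_sum, hy, mul_one]

lemma sum_mul_eq_piStar_of_support_subset {π y : A → ℝ} {S : Finset A}
    (hy : y ∈ stdSimplex ℝ A) (hsupp : ∀ b, y b ≠ 0 → b ∈ bStar π S) :
    ∑ a, π a * y a = piStar π S :=
  sum_mul_eq_of_forall_ne_zero hy.2 fun b hb => (Finset.mem_filter.mp (hsupp b hb)).2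

variable [Nonempty A]

lemma sum_mul_le_sup' (π : A → ℝ) {x : A → ℝ} (hx : x ∈ stdSimplex ℝ A) :
    ∑ a, π a * x a ≤ Finset.univ.sup' Finset.univ_nonempty π :=
  calc ∑ a, π a * x a ≤ ∑ a, Finset.univ.sup' Finset.univ_nonempty π * x a :=
        Finset.sum_le_sum fun a _ =>
          mul_le_mul_of_nonneg_right (Finset.le_sup' π (Finset.mem_univ a)) (hx.1 a)
    _ = Finset.univ.sup' Finset.univ_nonempty π := by rw [← Finset.mul_sum, hx.2, mul_one]

lemma sum_mul_eq_sup'_iff (π : A → ℝ) {x : A → ℝ} (hx : x ∈ stdSimplex ℝ A) :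
    ∑ a, π a * x a = Finset.univ.sup' Finset.univ_nonempty π ↔
      ∀ a, 0 < x a → π a = Finset.univ.sup' Finset.univ_nonempty π := by
  set M := Finset.univ.sup' Finset.univ_nonempty π
  refine ⟨fun h a hxa => ?_, fun h =>
    sum_mul_eq_of_forall_ne_zero hx.2 fun a ha => h a ((hx.1 a).lt_of_ne' ha)⟩
  have hgap : ∑ b, (M - π b) * x b = 0 := by
    simp only [sub_mul, Finset.sum_sub_distrib, ← Finset.mul_sum, hx.2, mul_one, h, sub_self]
  have hterm := (Finset.sum_eq_zero_iff_of_nonneg fun b _ => mul_nonneg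
    (sub_nonneg.mpr (Finset.le_sup' π (Finset.mem_univ b))) (hx.1 b)).mp hgap a
    (Finset.mem_univ a)
  rcases mul_eq_zero.mp hterm with h0 | h0
  · linarith
  · exact absurd h0 hxa.ne'

lemma piStar_le_sup' (π : A → ℝ) {S : Finset A} (hS : S.Nonempty) :
    piStar π S ≤ Finset.univ.sup' Finset.univ_nonempty π := by
  rw [piStar, dif_pos hS]
  exact Finset.sup'_le hS π fun b _ => Finset.le_sup' π (Finset.mem_univ b)

lemma sup'_le_piStar_of_mem {π : A → ℝ} {S : Finset A} {b : A} (hb : b ∈ S)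
    (hmax : Finset.univ.sup' Finset.univ_nonempty π = π b) :
    Finset.univ.sup' Finset.univ_nonempty π ≤ piStar π S := by
  rw [piStar, dif_pos ⟨b, hb⟩, hmax]
  exact Finset.le_sup' π hb

end Payoffs

lemma excess_add_smul {A : Type*} [Fintype A] (x d π : A → ℝ) (t : ℝ) (S : Finset A) :
    excess (x + t • d) π S = excess x π S - t * ∑ a, π a * d a := by
  simp only [excess, Pi.add_apply, Pi.smul_apply, smul_eq_mul, mul_add, Finset.sum_add_distrib,
    Finset.mul_sum, mul_left_comm t]
  ring

section BirthDeath

variable {A : Type*} [Fintype A] (PA : Finset A → ℝ) (μQ : Measure ℝ)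

lemma Qfun_mul_self_nonneg (hQ0 : ∀ q : ℝ, q ≤ 0 → Qfun μQ q = 0) (q : ℝ) :
    0 ≤ Qfun μQ q * q := by
  rcases le_or_gt q 0 with hq | hq
  · simp [hQ0 q hq]
  · exact mul_nonneg (Qfun_nonneg μQ q) hq.le

lemma Hbd_nonpos (hPnn : ∀ S, 0 ≤ PA S) (hQ0 : ∀ q : ℝ, q ≤ 0 → Qfun μQ q = 0)
    (x π : A → ℝ) : Hbd PA μQ x π ≤ 0 := by
  rw [Hbd, neg_mul, neg_nonpos]
  refine mul_nonneg (Finset.sum_nonneg fun S _ => mul_nonneg (hPnn S) (Qfun_nonneg μQ _))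
    (Finset.sum_nonneg fun S _ => ?_)
  rw [mul_assoc]
  exact mul_nonneg (hPnn S) (Qfun_mul_self_nonneg μQ hQ0 _)

lemma Hbd_eq_zero_iff (hPnn : ∀ S, 0 ≤ PA S) (hQ0 : ∀ q : ℝ, q ≤ 0 → Qfun μQ q = 0)
    (hQpos : ∀ q : ℝ, 0 < q → 0 < Qfun μQ q) (x π : A → ℝ) :
    Hbd PA μQ x π = 0 ↔
      ∀ S ∈ (Finset.univ : Finset A).powerset, 0 < PA S → excess x π S ≤ 0 := by
  constructor
  · intro hH S hS hPS
    by_contra! he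
    have hα : 0 < ∑ S ∈ (Finset.univ : Finset A).powerset, PA S * Qfun μQ (excess x π S) :=
      Finset.sum_pos' (fun T _ => mul_nonneg (hPnn T) (Qfun_nonneg μQ _))
        ⟨S, hS, mul_pos hPS (hQpos _ he)⟩
    have hβ : 0 < ∑ S ∈ (Finset.univ : Finset A).powerset,
        PA S * Qfun μQ (excess x π S) * excess x π S :=
      Finset.sum_pos' (fun T _ => by
          rw [mul_assoc]; exact mul_nonneg (hPnn T) (Qfun_mul_self_nonneg μQ hQ0 _))
        ⟨S, hS, mul_pos (mul_pos hPS (hQpos _ he)) he⟩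
    rw [Hbd, neg_mul, neg_eq_zero] at hH
    exact (mul_pos hα hβ).ne' hH
  · intro h
    have hβ : ∑ S ∈ (Finset.univ : Finset A).powerset,
        PA S * Qfun μQ (excess x π S) * excess x π S = 0 := by
      refine Finset.sum_eq_zero fun S hS => ?_
      rcases (hPnn S).eq_or_lt with h0 | h0
      · simp [← h0]
      · simp [hQ0 _ (h S hS h0)]
    rw [Hbd, hβ, mul_zero]

lemma forall_excess_nonpos_iff [DecidableEq A] [Nonempty A] (hPnn : ∀ S, 0 ≤ PA S)
    (hPempty : PA (∅ : Finset A) = 0)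
    (hA1 : ∀ b : A,
      0 < ∑ S ∈ (Finset.univ : Finset A).powerset.filter (fun S => b ∈ S), PA S)
    {x : A → ℝ} (hx : x ∈ stdSimplex ℝ A) (π : A → ℝ) :
    (∀ S ∈ (Finset.univ : Finset A).powerset, 0 < PA S → excess x π S ≤ 0) ↔
      ∀ a, 0 < x a → π a = Finset.univ.sup' Finset.univ_nonempty π := by
  rw [← sum_mul_eq_sup'_iff π hx]
  refine ⟨fun h => ?_, fun h S _ hS => ?_⟩
  · obtain ⟨b, -, hb⟩ := Finset.exists_mem_eq_sup' Finset.univ_nonempty π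
    obtain ⟨S, hS, hPS⟩ := Finset.exists_ne_zero_of_sum_ne_zero (hA1 b).ne'
    rw [Finset.mem_filter] at hS
    have hexcess := h S hS.1 ((hPnn S).lt_of_ne' hPS)
    have hsup := sup'_le_piStar_of_mem hS.2 hb
    rw [excess] at hexcess
    exact le_antisymm (sum_mul_le_sup' π hx) (by linarith)
  · have hne : S.Nonempty :=
      Finset.nonempty_iff_ne_empty.mpr (by rintro rfl; exact hS.ne' hPempty)
    rw [excess, h]
    linarith [piStar_le_sup' π hne]

lemma sum_mul_direction_eq (hPempty : PA (∅ : Finset A) = 0) {x π : A → ℝ}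
    {y : Finset A → A → ℝ}
    (hy : ∀ S ∈ (Finset.univ : Finset A).powerset, S.Nonempty →
      y S ∈ stdSimplex ℝ A ∧ ∀ b, y S b ≠ 0 → b ∈ bStar π S) :
    ∑ a, π a * ∑ S ∈ (Finset.univ : Finset A).powerset,
        PA S * Qfun μQ (excess x π S) * (y S a - x a) =
      ∑ S ∈ (Finset.univ : Finset A).powerset,
        PA S * Qfun μQ (excess x π S) * excess x π S := by
  simp_rw [Finset.mul_sum]
  rw [Finset.sum_comm]
  refine Finset.sum_congr rfl fun S hS => ?_
  rcases S.eq_empty_or_nonempty with rfl | hne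
  · simp [hPempty]
  obtain ⟨hyS, hsupp⟩ := hy S hS hne
  calc ∑ a, π a * (PA S * Qfun μQ (excess x π S) * (y S a - x a))
      = PA S * Qfun μQ (excess x π S) * (∑ a, π a * y S a - ∑ a, π a * x a) := by
        rw [← Finset.sum_sub_distrib, Finset.mul_sum]
        exact Finset.sum_congr rfl fun a _ => by ring
    _ = PA S * Qfun μQ (excess x π S) * excess x π S := by
        rw [sum_mul_eq_piStar_of_support_subset hyS hsupp, excess]

lemma hasDerivAt_Gbd_add_smul [IsFiniteMeasure μQ] (hpos : ∀ᵐ q ∂μQ, 0 ≤ q)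
    (hatomless : ∀ q : ℝ, μQ {q} = 0) (x π d : A → ℝ) :
    HasDerivAt (fun t : ℝ => Gbd PA μQ (x + t • d) π)
      (-(∑ S ∈ (Finset.univ : Finset A).powerset, PA S * Qfun μQ (excess x π S)) *
        ∑ a, π a * d a) 0 := by
  set c := ∑ a, π a * d a
  have hline : ∀ e : ℝ, HasDerivAt (fun t : ℝ => e - t * c) (-c) 0 := fun e => by
    simpa using ((hasDerivAt_id (0 : ℝ)).mul_const c).const_sub e
  have hterm : ∀ S : Finset A, HasDerivAt
      (fun t : ℝ => ∫ q, max (excess x π S - t * c - q) 0 ∂μQ)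
      (Qfun μQ (excess x π S) * -c) 0 := fun S => by
    have hF := hasDerivAt_integral_max_sub μQ
      (integrable_max_sub_const μQ hpos (excess x π S)) (hatomless _)
    exact (by simpa using hF : HasDerivAt _ _ (excess x π S - 0 * c)).comp 0
      (hline (excess x π S))
  have hval : -(∑ S ∈ (Finset.univ : Finset A).powerset, PA S * Qfun μQ (excess x π S)) * c =
      ∑ S ∈ (Finset.univ : Finset A).powerset, PA S * (Qfun μQ (excess x π S) * -c) := by
    rw [neg_mul, Finset.sum_mul, ← Finset.sum_neg_distrib]
    exact Finset.sum_congr rfl fun S _ => by ring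
  simp only [Gbd, excess_add_smul, hval]
  exact HasDerivAt.fun_sum fun S _ => (hterm S).const_mul (PA S)

end BirthDeath

theorem stmt19_general {A : Type*} [Fintype A] [DecidableEq A] [Nonempty A]
    (PA : Finset A → ℝ) (μQ : Measure ℝ) [IsProbabilityMeasure μQ]
    (hPnn : ∀ A', 0 ≤ PA A')
    (hPempty : PA (∅ : Finset A) = 0)
    -- Assumption Q1
    (hQ1a : ∀ q : ℝ, q < 0 → Qfun μQ q = 0)
    (hQ1b : ∀ q : ℝ, 0 < q → 0 < Qfun μQ q)
    -- Assumption A1-i'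
    (hA1i' : ∀ b : A,
      0 < ∑ A' ∈ (Finset.univ : Finset A).powerset.filter (fun A' => b ∈ A'), PA A')
    -- `μ_Q` is atomless
    (hatomless : ∀ q : ℝ, μQ {q} = 0) :
    -- (a)
    (∀ x ∈ stdSimplex ℝ A, ∀ π : A → ℝ,
      Hbd PA μQ x π ≤ 0 ∧
      (Hbd PA μQ x π = 0 ↔
        ∀ a : A, 0 < x a → π a = Finset.univ.sup' Finset.univ_nonempty π)) ∧
    -- (b)
    (∀ x ∈ stdSimplex ℝ A, ∀ π : A → ℝ,
      ∀ y : Finset A → A → ℝ,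
        (∀ A' ∈ (Finset.univ : Finset A).powerset, A'.Nonempty →
          y A' ∈ stdSimplex ℝ A ∧ ∀ b, y A' b ≠ 0 → b ∈ bStar π A') →
        HasDerivWithinAt
          (fun t : ℝ => Gbd PA μQ
            (x + t • (fun b => ∑ A' ∈ (Finset.univ : Finset A).powerset,
              PA A' * Qfun μQ (excess x π A') * (y A' b - x b))) π)
          (Hbd PA μQ x π) (Set.Ici (0 : ℝ)) 0) := by
  have hQ0 : ∀ q : ℝ, q ≤ 0 → Qfun μQ q = 0 := fun _ =>
    Qfun_eq_zero_of_nonpos μQ hQ1a (hatomless 0)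
  have hpos : ∀ᵐ q ∂μQ, 0 ≤ q :=
    (measure_eq_zero_iff_ae_notMem.mp (measure_Iio_zero_eq_zero μQ hQ1a)).mono
      fun _ hq => not_lt.mp hq
  refine ⟨fun x hx π => ⟨Hbd_nonpos PA μQ hPnn hQ0 x π, ?_⟩, fun x _ π y hy => ?_⟩
  · rw [Hbd_eq_zero_iff PA μQ hPnn hQ0 hQ1b, forall_excess_nonpos_iff PA hPnn hPempty hA1i' hx]
  · have hG := hasDerivAt_Gbd_add_smul PA μQ hpos hatomless x π
      (fun b => ∑ A' ∈ (Finset.univ : Finset A).powerset,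
        PA A' * Qfun μQ (excess x π A') * (y A' b - x b))
    rw [sum_mul_direction_eq PA μQ hPempty hy] at hG
    exact hG.hasDerivWithinAt

/-- Gains in the birth–death / excess-payoff framework: `H ≤ 0`, with `H = 0` exactly
at the Nash states, and the right derivative of `t ↦ G(x + tΔx)[π]` at `0` equals
`H(x)[π]`. -/
theorem stmt19 {A : Type*} [Fintype A] [DecidableEq A] [Nonempty A]
    (PA : Finset A → ℝ) (μQ : Measure ℝ) [IsProbabilityMeasure μQ]
    (hPnn : ∀ A', 0 ≤ PA A')
    (hPempty : PA (∅ : Finset A) = 0)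
    (hPsum : ∑ A' ∈ (Finset.univ : Finset A).powerset, PA A' = 1)
    -- Assumption Q1
    (hQ1a : ∀ q : ℝ, q < 0 → Qfun μQ q = 0)
    (hQ1b : ∀ q : ℝ, 0 < q → 0 < Qfun μQ q)
    -- Assumption A1-i'
    (hA1i' : ∀ b : A,
      0 < ∑ A' ∈ (Finset.univ : Finset A).powerset.filter (fun A' => b ∈ A'), PA A')
    -- `μ_Q` is atomless
    (hatomless : ∀ q : ℝ, μQ {q} = 0) :
    -- (a)
    (∀ x ∈ stdSimplex ℝ A, ∀ π : A → ℝ,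
      Hbd PA μQ x π ≤ 0 ∧
      (Hbd PA μQ x π = 0 ↔
        ∀ a : A, 0 < x a → π a = Finset.univ.sup' Finset.univ_nonempty π)) ∧
    -- (b)
    (∀ x ∈ stdSimplex ℝ A, ∀ π : A → ℝ,
      ∀ y : Finset A → A → ℝ,
        (∀ A' ∈ (Finset.univ : Finset A).powerset, A'.Nonempty →
          y A' ∈ stdSimplex ℝ A ∧ ∀ b, y A' b ≠ 0 → b ∈ bStar π A') →
        HasDerivWithinAt
          (fun t : ℝ => Gbd PA μQ
            (x + t • (fun b => ∑ A' ∈ (Finset.univ : Finset A).powerset,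
              PA A' * Qfun μQ (excess x π A') * (y A' b - x b))) π)
          (Hbd PA μQ x π) (Set.Ici (0 : ℝ)) 0) :=
  stmt19_general PA μQ hPnn hPempty hQ1a hQ1b hA1i' hatomless
end
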